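/- Let G_1,…,G_N ∈ S = ℝ[x,y,z] be homogeneous forms with G_i ∈ ⟨x,y⟩ for all i and ⟨x,y⟩^k ⊆ J := ⟨G_1,…,G_N⟩ for some k ≥ 0. For each i, let c_i be the highest power of z occurring in G_i and let F_i ∈ ℝ[x,y] be the coefficient of z^{c_i} in G_i (so in_ω G_i = z^{c_i} F_i for ω = (0,0,1)); set I := ⟨F_1,…,F_N⟩. If in_ω J ⊆ I, then there exists an integer D such that dim_ℝ(S/J)_d = dim_ℝ(S/I)_d for all d ≥ D; that is, S/J and S/I have the same Hilbert polynomial. -/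

import Mathlib

/-!
Write `S_d` for the degree-`d` part of `S` and `in` for `in_ω`. In large degrees `I` and `in J`
agree: a multiple `x^m F_i` is either a multiple of `z^(c_i) F_i = in G_i`, or all of its
monomials have `z`-exponent `< c_i`, hence `(x,y)`-degree `≥ k`, so they lie in `⟨x,y⟩^k ⊆ J` and
are their own initial forms.

It remains that `dim J_d = dim (in J)_d`. Filter `S_d` by `z`-degree. For every `e`, the
`z^e`-layers of the elements of `J_d` of `z`-degree `≤ e` are exactly those of `(in J)_d`: such a
layer is `0` or the initial form of an element of `J`, and conversely the `(d, e)`-component of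
`in F`, for `F ∈ J`, is the top layer of the degree-`d` component of `F`, which lies in `J` since
`J` is homogeneous. Equal layers give equal dimensions.
-/

open MvPolynomial

noncomputable section

abbrev PS := MvPolynomial (Fin 3) ℝ

/-- `dim_ℝ (S/J)_d`: the dimension of the degree-`d` graded piece of `S/J`. -/
def hdim (J : Ideal PS) (d : ℕ) : ℕ :=
  Module.finrank ℝ ↥(Submodule.map (Ideal.Quotient.mkₐ ℝ J).toLinearMap
    (homogeneousSubmodule (Fin 3) ℝ d))

/-- The coefficient of `z^c` in `G`, viewed as a polynomial in `z = X 2` with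
coefficients in `ℝ[x,y]`. -/
def zCoeff (G : PS) (c : ℕ) : PS :=
  ∑ m ∈ G.support.filter (fun m => m 2 = c),
    monomial (m - Finsupp.single 2 c) (coeff m G)

/-- The highest power of `z = X 2` occurring in `F`. -/
def zdeg (F : PS) : ℕ := F.support.sup fun m => m 2

/-- The initial form of `F` with respect to the weight `ω = (0,0,1)`: the sum of the
terms of `F` whose power of `z` is maximal. -/
def inW (F : PS) : PS :=
  ∑ m ∈ F.support.filter (fun m => m 2 = zdeg F), monomial m (coeff m F)

/-- The initial ideal `in_ω K` of an ideal `K` for the weight `ω = (0,0,1)`. -/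
def inIdeal (K : Ideal PS) : Ideal PS :=
  Ideal.span {p : PS | ∃ F ∈ K, F ≠ 0 ∧ inW F = p}

open Module Finsupp

attribute [local instance] MvPolynomial.gradedAlgebra

theorem finrank_map_add_finrank_inf_ker {K V W : Type*} [DivisionRing K] [AddCommGroup V]
    [Module K V] [AddCommGroup W] [Module K W] (f : V →ₗ[K] W) (P : Submodule K V)
    [FiniteDimensional K P] :
    finrank K (P.map f) + finrank K ↥(P ⊓ LinearMap.ker f) = finrank K P := by
  have h := LinearMap.finrank_range_add_finrank_ker (f ∘ₗ P.subtype)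
  rwa [LinearMap.range_comp, Submodule.range_subtype, LinearMap.ker_comp,
    ← top_inf_eq (Submodule.comap _ _), ← Submodule.comap_subtype_self P, ← Submodule.comap_inf,
    (Submodule.comapSubtypeEquivOfLe inf_le_left).finrank_eq] at h

namespace MvPolynomial

section WeightedComponents

variable {σ R : Type*} [CommSemiring R]

theorem restrictScalars_span_le_of_monomial_mul_mem {s : Set (MvPolynomial σ R)}
    {T : Submodule R (MvPolynomial σ R)} (h : ∀ m, ∀ f ∈ s, monomial m 1 * f ∈ T) :
    (Ideal.span s).restrictScalars R ≤ T := by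
  have hmul : ∀ f ∈ s, ∀ a : MvPolynomial σ R, a * f ∈ T := by
    intro f hf a
    induction a using MvPolynomial.induction_on' with
    | monomial m r =>
      have hr : monomial m r = r • monomial m 1 := by rw [smul_monomial, smul_eq_mul, mul_one]
      rw [hr, smul_mul_assoc]
      exact T.smul_mem r (h m f hf)
    | add p q hp hq => rw [add_mul]; exact T.add_mem hp hq
  intro x hx
  -- all multiples, so that the `smul` step of the induction goes through
  have hx' : ∀ a, a * x ∈ T := by
    induction hx using Submodule.span_induction with
    | mem f hf => exact hmul f hf
    | zero => simp
    | add x y _ _ hx hy => intro a; rw [mul_add]; exact T.add_mem (hx a) (hy a)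
    | smul b x _ hx => intro a; rw [smul_eq_mul, ← mul_assoc]; exact hx (a * b)
  simpa using hx' 1

theorem weightedHomogeneousComponent_monomial_mul (w : σ → ℕ) (e : ℕ) (m : σ →₀ ℕ)
    (p : MvPolynomial σ R) :
    weightedHomogeneousComponent w e (monomial m 1 * p) =
      if weight w m ≤ e then monomial m 1 * weightedHomogeneousComponent w (e - weight w m) p
      else 0 := by
  classical
  ext μ
  rw [apply_ite (coeff μ), coeff_weightedHomogeneousComponent, coeff_monomial_mul',
    coeff_monomial_mul', coeff_zero]
  by_cases hm : m ≤ μ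
  · have hμ : weight w μ = weight w (μ - m) + weight w m := by
      rw [← map_add, tsub_add_cancel_of_le hm]
    simp only [hm, if_true, one_mul, coeff_weightedHomogeneousComponent]
    split_ifs <;> first | rfl | omega
  · simp [hm]

theorem IsWeightedHomogeneous.weightedHomogeneousComponent {M : Type*} [AddCommMonoid M]
    {w w' : σ → M} {p : MvPolynomial σ R} {n : M} (hp : IsWeightedHomogeneous w p n) (n' : M) :
    IsWeightedHomogeneous w (weightedHomogeneousComponent w' n' p) n := by
  classical
  intro μ hμ
  rw [coeff_weightedHomogeneousComponent] at hμ
  split_ifs at hμ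
  · exact hp hμ
  · exact absurd rfl hμ

theorem weightedHomogeneousComponent_comm {M M' : Type*} [AddCommMonoid M] [AddCommMonoid M']
    (w : σ → M) (w' : σ → M') (n : M) (n' : M') (p : MvPolynomial σ R) :
    weightedHomogeneousComponent w n (weightedHomogeneousComponent w' n' p) =
      weightedHomogeneousComponent w' n' (weightedHomogeneousComponent w n p) := by
  classical
  ext μ
  simp only [coeff_weightedHomogeneousComponent]
  split_ifs <;> rfl

theorem IsHomogeneous.degree_eq_of_mem_support {p : MvPolynomial σ R} {n : ℕ}
    (hp : p.IsHomogeneous n) {m : σ →₀ ℕ} (hm : m ∈ p.support) : m.degree = n := by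
  rw [degree_eq_weight_one]
  exact hp (mem_support_iff.mp hm)

end WeightedComponents

section WeightFiltration

variable {σ R : Type*} [CommSemiring R] {w : σ → ℕ}

def weightLT (R : Type*) [CommSemiring R] (w : σ → ℕ) (e : ℕ) : Submodule R (MvPolynomial σ R) :=
  restrictSupport R {m | weight w m < e}

theorem mem_weightLT {e : ℕ} {p : MvPolynomial σ R} :
    p ∈ weightLT R w e ↔ ∀ m ∈ p.support, weight w m < e := by
  rw [weightLT, mem_restrictSupport_iff]
  rfl

theorem weightLT_zero : weightLT R w 0 = ⊥ := by
  refine eq_bot_iff.mpr fun p hp => ?_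
  rw [Submodule.mem_bot, ← support_eq_empty]
  exact Finset.eq_empty_of_forall_notMem fun m hm => Nat.not_lt_zero _ (mem_weightLT.mp hp m hm)

theorem weightedHomogeneousComponent_mem_weightLT_succ (e : ℕ) (p : MvPolynomial σ R) :
    weightedHomogeneousComponent w e p ∈ weightLT R w (e + 1) := by
  classical
  refine mem_weightLT.mpr fun m hm => ?_
  rw [support_weightedHomogeneousComponent, Finset.mem_filter] at hm
  exact Nat.lt_succ_of_le hm.2.le

theorem weightedHomogeneousComponent_mem_weightLT {w' : σ → ℕ} {e : ℕ} {p : MvPolynomial σ R}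
    (hp : p ∈ weightLT R w e) (n : ℕ) : weightedHomogeneousComponent w' n p ∈ weightLT R w e := by
  classical
  refine mem_weightLT.mpr fun m hm => ?_
  rw [support_weightedHomogeneousComponent, Finset.mem_filter] at hm
  exact mem_weightLT.mp hp m hm.1

theorem monomial_one_mul_mem_weightLT {e : ℕ} {p : MvPolynomial σ R} (m : σ →₀ ℕ)
    (hp : p ∈ weightLT R w e) : monomial m 1 * p ∈ weightLT R w (weight w m + e) := by
  classical
  rw [mem_weightLT] at hp ⊢
  intro μ hμ
  rw [mem_support_iff, coeff_monomial_mul', one_mul] at hμ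
  split_ifs at hμ with hm
  · have := hp _ (mem_support_iff.mpr hμ)
    rw [← tsub_add_cancel_of_le hm, map_add]
    omega
  · exact absurd rfl hμ

theorem weightLT_succ_inf_ker (e : ℕ) :
    weightLT R w (e + 1) ⊓ LinearMap.ker (weightedHomogeneousComponent w e) = weightLT R w e := by
  classical
  ext p
  simp only [Submodule.mem_inf, LinearMap.mem_ker, mem_weightLT]
  constructor
  · rintro ⟨hp, hpe⟩ m hm
    refine lt_of_le_of_ne (Nat.lt_succ_iff.mp (hp m hm)) fun hme => mem_support_iff.mp hm ?_
    have := congrArg (coeff m) hpe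
    rwa [coeff_weightedHomogeneousComponent, if_pos hme, coeff_zero] at this
  · intro hp
    exact ⟨fun m hm => (hp m hm).trans (Nat.lt_succ_self e),
      weightedHomogeneousComponent_eq_zero' _ _ fun m hm => (hp m hm).ne⟩

variable {K : Type*} [Field K]

theorem finrank_inf_weightLT_succ (A : Submodule K (MvPolynomial σ K)) [FiniteDimensional K A]
    (e : ℕ) :
    finrank K ↥((A ⊓ weightLT K w (e + 1)).map (weightedHomogeneousComponent w e)) +
      finrank K ↥(A ⊓ weightLT K w e) = finrank K ↥(A ⊓ weightLT K w (e + 1)) := by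
  have h := finrank_map_add_finrank_inf_ker (weightedHomogeneousComponent w e)
    (A ⊓ weightLT K w (e + 1))
  rwa [inf_assoc, weightLT_succ_inf_ker] at h

theorem finrank_inf_weightLT_eq_of_map_eq (A B : Submodule K (MvPolynomial σ K))
    [FiniteDimensional K A] [FiniteDimensional K B]
    (h : ∀ e, (A ⊓ weightLT K w (e + 1)).map (weightedHomogeneousComponent w e) =
      (B ⊓ weightLT K w (e + 1)).map (weightedHomogeneousComponent w e)) (e : ℕ) :
    finrank K ↥(A ⊓ weightLT K w e) = finrank K ↥(B ⊓ weightLT K w e) := by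
  induction e with
  | zero => rw [weightLT_zero, inf_bot_eq, inf_bot_eq]
  | succ e ih => rw [← finrank_inf_weightLT_succ A, ← finrank_inf_weightLT_succ B, h e, ih]

end WeightFiltration

section HomogeneousPiece

variable {σ R : Type*} [CommSemiring R]

def homogeneousPiece (K : Ideal (MvPolynomial σ R)) (d : ℕ) : Submodule R (MvPolynomial σ R) :=
  homogeneousSubmodule σ R d ⊓ K.restrictScalars R

instance {K : Type*} [Field K] [Finite σ] (d : ℕ) :
    FiniteDimensional K (homogeneousSubmodule σ K d) :=
  Module.Finite.iff_fg.mpr (homogeneousSubmodule_fg σ K d)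

instance {K : Type*} [Field K] [Finite σ] (J : Ideal (MvPolynomial σ K)) (d : ℕ) :
    FiniteDimensional K (homogeneousPiece J d) :=
  Submodule.finiteDimensional_inf_left _ _

end HomogeneousPiece

end MvPolynomial

theorem hdim_add_finrank_homogeneousPiece (K : Ideal PS) (d : ℕ) :
    hdim K d + finrank ℝ (homogeneousPiece K d) = finrank ℝ (homogeneousSubmodule (Fin 3) ℝ d) := by
  have hker : LinearMap.ker (Ideal.Quotient.mkₐ ℝ K).toLinearMap = K.restrictScalars ℝ := by
    ext p
    simp [Ideal.Quotient.eq_zero_iff_mem]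
  have := finrank_map_add_finrank_inf_ker (Ideal.Quotient.mkₐ ℝ K).toLinearMap
    (homogeneousSubmodule (Fin 3) ℝ d)
  rwa [hker] at this

section InitialForms

abbrev zWeight : Fin 3 → ℕ := Pi.single 2 1

theorem weight_zWeight (m : Fin 3 →₀ ℕ) : weight zWeight m = m 2 :=
  weight_single_one_apply 2 m

theorem zdeg_eq_degreeOf (F : PS) : zdeg F = degreeOf 2 F :=
  (degreeOf_eq_sup 2 F).symm

theorem inW_eq (F : PS) : inW F = weightedHomogeneousComponent zWeight (zdeg F) F := by
  classical
  simp only [inW, weightedHomogeneousComponent_apply, weight_zWeight]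

theorem inW_mem_inIdeal {K : Ideal PS} {F : PS} (hF : F ∈ K) : inW F ∈ inIdeal K := by
  by_cases h0 : F = 0
  · simp [h0, inW_eq]
  · exact Ideal.subset_span ⟨F, hF, h0, rfl⟩

theorem mem_weightLT_zdeg_succ (F : PS) : F ∈ weightLT ℝ zWeight (zdeg F + 1) :=
  mem_weightLT.mpr fun m hm => by
    rw [weight_zWeight, zdeg_eq_degreeOf]
    exact Nat.lt_succ_of_le (monomial_le_degreeOf 2 hm)

theorem zComponent_eq_zero_or_eq_inW {v : PS} {e : ℕ} (hv : v ∈ weightLT ℝ zWeight (e + 1)) :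
    weightedHomogeneousComponent zWeight e v = 0 ∨
      weightedHomogeneousComponent zWeight e v = inW v := by
  have hle : zdeg v ≤ e := by
    rw [zdeg_eq_degreeOf, degreeOf_le_iff]
    intro m hm
    have := mem_weightLT.mp hv m hm
    rw [weight_zWeight] at this
    omega
  rcases hle.lt_or_eq with hlt | heq
  · left
    refine weightedHomogeneousComponent_eq_zero' _ _ fun m hm => ?_
    have := mem_weightLT.mp (mem_weightLT_zdeg_succ v) m hm
    omega
  · right
    rw [inW_eq, heq]

theorem zComponent_mem_inIdeal {K : Ideal PS} {v : PS} {e : ℕ} (hvK : v ∈ K)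
    (hv : v ∈ weightLT ℝ zWeight (e + 1)) :
    weightedHomogeneousComponent zWeight e v ∈ inIdeal K := by
  rcases zComponent_eq_zero_or_eq_inW hv with h | h
  · rw [h]; exact zero_mem _
  · rw [h]; exact inW_mem_inIdeal hvK

theorem inIdeal_le_span_inW (K : Ideal PS) :
    (inIdeal K).restrictScalars ℝ ≤ Submodule.span ℝ (inW '' (K : Set PS)) := by
  refine restrictScalars_span_le_of_monomial_mul_mem ?_
  rintro m _ ⟨F, hFK, -, rfl⟩
  have hmF := monomial_one_mul_mem_weightLT m (mem_weightLT_zdeg_succ F)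
  rw [← add_assoc] at hmF
  have h : monomial m 1 * inW F =
      weightedHomogeneousComponent zWeight (weight zWeight m + zdeg F) (monomial m 1 * F) := by
    rw [weightedHomogeneousComponent_monomial_mul, if_pos le_self_add, add_tsub_cancel_left,
      inW_eq]
  rw [h]
  rcases zComponent_eq_zero_or_eq_inW hmF with h0 | hin
  · rw [h0]; exact zero_mem _
  · rw [hin]; exact Submodule.subset_span ⟨_, K.mul_mem_left _ hFK, rfl⟩

end InitialForms

section Degeneration

variable {J : Ideal PS}

theorem zComponent_homogeneousComponent_mem_map
    (hJ : J.IsHomogeneous (homogeneousSubmodule (Fin 3) ℝ)) {u : PS} (hu : u ∈ inIdeal J)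
    (d e : ℕ) :
    weightedHomogeneousComponent zWeight e (homogeneousComponent d u) ∈
      (homogeneousPiece J d ⊓ weightLT ℝ zWeight (e + 1)).map
        (weightedHomogeneousComponent zWeight e) := by
  suffices Submodule.span ℝ (inW '' (J : Set PS)) ≤
      ((homogeneousPiece J d ⊓ weightLT ℝ zWeight (e + 1)).map
        (weightedHomogeneousComponent zWeight e)).comap
          (weightedHomogeneousComponent zWeight e ∘ₗ homogeneousComponent d) from
    this (inIdeal_le_span_inW J hu)
  rw [Submodule.span_le]
  rintro _ ⟨F, hFJ, rfl⟩
  have hcomm : homogeneousComponent d (inW F) =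
      weightedHomogeneousComponent zWeight (zdeg F) (homogeneousComponent d F) := by
    rw [inW_eq]
    exact weightedHomogeneousComponent_comm 1 zWeight d (zdeg F) F
  rw [SetLike.mem_coe, Submodule.mem_comap, LinearMap.comp_apply, hcomm,
    weightedHomogeneousComponent_of_mem (weightedHomogeneousComponent_mem _ _ _)]
  split_ifs with he
  · subst he
    exact ⟨homogeneousComponent d F,
      ⟨⟨homogeneousComponent_mem d F, homogeneousComponent_mem_of_mem hJ hFJ d⟩,
        weightedHomogeneousComponent_mem_weightLT (mem_weightLT_zdeg_succ F) d⟩, rfl⟩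
  · exact zero_mem _

theorem map_zComponent_homogeneousPiece_inIdeal
    (hJ : J.IsHomogeneous (homogeneousSubmodule (Fin 3) ℝ)) (d e : ℕ) :
    (homogeneousPiece (inIdeal J) d ⊓ weightLT ℝ zWeight (e + 1)).map
        (weightedHomogeneousComponent zWeight e) =
      (homogeneousPiece J d ⊓ weightLT ℝ zWeight (e + 1)).map
        (weightedHomogeneousComponent zWeight e) := by
  apply le_antisymm
  · rintro _ ⟨u, ⟨⟨hud, huJ⟩, -⟩, rfl⟩
    rw [← (homogeneousComponent_of_mem hud).trans (if_pos rfl)]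
    exact zComponent_homogeneousComponent_mem_map hJ huJ d e
  · rintro _ ⟨v, ⟨⟨hvd, hvJ⟩, hvW⟩, rfl⟩
    exact ⟨weightedHomogeneousComponent zWeight e v,
      ⟨⟨IsWeightedHomogeneous.weightedHomogeneousComponent hvd e, zComponent_mem_inIdeal hvJ hvW⟩,
        weightedHomogeneousComponent_mem_weightLT_succ e v⟩,
      weightedHomogeneousComponent_eq_self (weightedHomogeneousComponent_isWeightedHomogeneous e v)⟩

theorem homogeneousPiece_le_weightLT (K : Ideal PS) (d : ℕ) :
    homogeneousPiece K d ≤ weightLT ℝ zWeight (d + 1) := by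
  rintro p ⟨hp, -⟩
  refine mem_weightLT.mpr fun m hm => ?_
  rw [weight_zWeight, Nat.lt_succ_iff, ← IsHomogeneous.degree_eq_of_mem_support hp hm]
  exact le_degree 2 m

theorem finrank_homogeneousPiece_inIdeal
    (hJ : J.IsHomogeneous (homogeneousSubmodule (Fin 3) ℝ)) (d : ℕ) :
    finrank ℝ (homogeneousPiece (inIdeal J) d) = finrank ℝ (homogeneousPiece J d) := by
  have h := finrank_inf_weightLT_eq_of_map_eq _ _
    (map_zComponent_homogeneousPiece_inIdeal hJ d) (d + 1)
  rwa [inf_eq_left.mpr (homogeneousPiece_le_weightLT _ d),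
    inf_eq_left.mpr (homogeneousPiece_le_weightLT _ d)] at h

end Degeneration

section LargeDegrees

theorem zdeg_eq_of_zCoeff_ne_zero {G : PS} {c : ℕ} (hle : ∀ m ∈ G.support, m 2 ≤ c)
    (hne : zCoeff G c ≠ 0) : zdeg G = c := by
  obtain ⟨m, hm, hmc⟩ : ∃ m ∈ G.support, m 2 = c := by
    by_contra! h
    refine hne (Finset.sum_eq_zero fun m hm => ?_)
    rw [Finset.mem_filter] at hm
    exact absurd hm.2 (h m hm.1)
  rw [zdeg_eq_degreeOf]
  exact le_antisymm (degreeOf_le_iff.mpr hle) (hmc ▸ monomial_le_degreeOf 2 hm)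

theorem monomial_mul_zCoeff_zdeg (G : PS) :
    monomial (single 2 (zdeg G)) 1 * zCoeff G (zdeg G) = inW G := by
  rw [zCoeff, Finset.mul_sum, inW]
  refine Finset.sum_congr rfl fun m hm => ?_
  rw [monomial_mul, one_mul,
    add_tsub_cancel_of_le (single_le_iff.mpr (Finset.mem_filter.mp hm).2.ge)]

theorem zCoeff_isHomogeneous {G : PS} {n : ℕ} (hG : G.IsHomogeneous n) (c : ℕ) :
    (zCoeff G c).IsHomogeneous (n - c) := by
  refine IsWeightedHomogeneous.sum _ _ _ fun m hm => isHomogeneous_monomial _ ?_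
  rw [Finset.mem_filter] at hm
  have hdeg := hG.degree_eq_of_mem_support hm.1
  have hsplit : m = (m - single 2 c) + single 2 c :=
    (tsub_add_cancel_of_le (single_le_iff.mpr hm.2.ge)).symm
  rw [hsplit, map_add, degree_single] at hdeg
  omega

theorem zCoeff_mem_weightLT_one (G : PS) (c : ℕ) : zCoeff G c ∈ weightLT ℝ zWeight 1 := by
  refine Submodule.sum_mem _ fun m hm => mem_weightLT.mpr fun μ hμ => ?_
  rw [Finset.mem_filter] at hm
  rw [Finset.mem_singleton.mp (support_monomial_subset hμ), weight_zWeight, tsub_apply,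
    single_eq_same, hm.2, Nat.sub_self]
  exact Nat.zero_lt_one

theorem monomial_mem_span_X_zero_X_one_pow {k : ℕ} {μ : Fin 3 →₀ ℕ} (hk : k ≤ μ 0 + μ 1) (r : ℝ) :
    monomial μ r ∈ (Ideal.span {X 0, X 1} : Ideal PS) ^ k := by
  have hμ : single 2 (μ 2) + (single 0 (μ 0) + single 1 (μ 1)) = μ := by
    ext i; fin_cases i <;> simp
  have hmon : monomial μ r = monomial (single 2 (μ 2)) r * (X 0 ^ μ 0 * X 1 ^ μ 1) := by
    rw [X_pow_eq_monomial, X_pow_eq_monomial, monomial_mul, monomial_mul, one_mul, mul_one, hμ]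
  have hxy : (X 0 ^ μ 0 * X 1 ^ μ 1 : PS) ∈ (Ideal.span {X 0, X 1} : Ideal PS) ^ (μ 0 + μ 1) := by
    rw [pow_add]
    exact Ideal.mul_mem_mul (Ideal.pow_mem_pow (Ideal.subset_span (by simp)) _)
      (Ideal.pow_mem_pow (Ideal.subset_span (by simp)) _)
  rw [hmon]
  exact Ideal.mul_mem_left _ _ (Ideal.pow_le_pow_right hk hxy)

theorem monomial_mem_inIdeal {K : Ideal PS} {μ : Fin 3 →₀ ℕ} (hμ : monomial μ (1 : ℝ) ∈ K)
    (r : ℝ) : monomial μ r ∈ inIdeal K := by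
  have hin : inW (monomial μ (1 : ℝ)) = monomial μ 1 := by
    rw [inW_eq, zdeg_eq_degreeOf, degreeOf_monomial_eq _ _ one_ne_zero, ← weight_zWeight]
    exact weightedHomogeneousComponent_eq_self (isWeightedHomogeneous_monomial _ _ _ rfl)
  rw [← mul_one r, ← smul_eq_mul, ← smul_monomial, smul_eq_C_mul, ← hin]
  exact Ideal.mul_mem_left _ _ (inW_mem_inIdeal hμ)

theorem mem_inIdeal_of_isHomogeneous_of_zExponent_le {J : Ideal PS} {k d : ℕ}
    (hk : (Ideal.span {X 0, X 1} : Ideal PS) ^ k ≤ J) {p : PS} (hp : p.IsHomogeneous d)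
    (hz : ∀ μ ∈ p.support, k + μ 2 ≤ d) : p ∈ inIdeal J := by
  rw [p.as_sum]
  refine Ideal.sum_mem _ fun μ hμ => monomial_mem_inIdeal (hk ?_) _
  refine monomial_mem_span_X_zero_X_one_pow ?_ _
  have hdeg := hp.degree_eq_of_mem_support hμ
  rw [degree_eq_sum, Fin.sum_univ_three] at hdeg
  have := hz μ hμ
  omega

theorem homogeneousComponent_monomial_mul_zCoeff_mem_inIdeal {J : Ideal PS} {G : PS}
    {n k d : ℕ} (hGJ : G ∈ J) (hG : G.IsHomogeneous n)
    (hk : (Ideal.span {X 0, X 1} : Ideal PS) ^ k ≤ J) (hd : k + zdeg G ≤ d) (m : Fin 3 →₀ ℕ) :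
    homogeneousComponent d (monomial m 1 * zCoeff G (zdeg G)) ∈ inIdeal J := by
  have hp : (monomial m 1 * zCoeff G (zdeg G)).IsHomogeneous (m.degree + (n - zdeg G)) :=
    (isHomogeneous_monomial _ rfl).mul (zCoeff_isHomogeneous hG _)
  rw [homogeneousComponent_of_mem hp]
  split_ifs with hdeg
  · by_cases hm : zdeg G ≤ m 2
    · rw [← tsub_add_cancel_of_le (single_le_iff.mpr hm), ← one_mul (1 : ℝ), ← monomial_mul,
        mul_assoc, monomial_mul_zCoeff_zdeg]
      exact Ideal.mul_mem_left _ _ (inW_mem_inIdeal hGJ)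
    · refine mem_inIdeal_of_isHomogeneous_of_zExponent_le hk (hdeg ▸ hp) fun μ hμ => ?_
      have hμz := mem_weightLT.mp
        (monomial_one_mul_mem_weightLT m (zCoeff_mem_weightLT_one G _)) μ hμ
      rw [weight_zWeight, weight_zWeight] at hμz
      omega
  · exact zero_mem _

theorem homogeneousPiece_span_zCoeff_le_inIdeal {ι : Type*} {J : Ideal PS} {G : ι → PS}
    {n : ι → ℕ} {k d : ℕ} (hG : ∀ i, (G i).IsHomogeneous (n i)) (hGJ : ∀ i, G i ∈ J)
    (hk : (Ideal.span {X 0, X 1} : Ideal PS) ^ k ≤ J) (hd : ∀ i, k + zdeg (G i) ≤ d) :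
    homogeneousPiece (Ideal.span (Set.range fun i => zCoeff (G i) (zdeg (G i)))) d ≤
      homogeneousPiece (inIdeal J) d := by
  rintro p ⟨hpd, hpI⟩
  refine ⟨hpd, ?_⟩
  have hcomp := restrictScalars_span_le_of_monomial_mul_mem
    (T := ((inIdeal J).restrictScalars ℝ).comap (homogeneousComponent d)) ?_ hpI
  · rwa [Submodule.mem_comap, homogeneousComponent_of_mem hpd, if_pos rfl] at hcomp
  · rintro m _ ⟨i, rfl⟩
    exact homogeneousComponent_monomial_mul_zCoeff_mem_inIdeal (hGJ i) (hG i) hk (hd i) m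

end LargeDegrees

theorem initial_containment_same_hilbert_polynomial_general
    (N : ℕ) (n : Fin N → ℕ) (G : Fin N → PS)
    (hhom : ∀ i, (G i).IsHomogeneous (n i))
    (J : Ideal PS) (hJ : J = Ideal.span (Set.range G))
    (honly : ∃ k : ℕ, (Ideal.span {X 0, X 1} : Ideal PS) ^ k ≤ J)
    (c : Fin N → ℕ)
    (hc : ∀ i, (∀ m ∈ (G i).support, m 2 ≤ c i) ∧ zCoeff (G i) (c i) ≠ 0)
    (F : Fin N → PS) (hF : ∀ i, F i = zCoeff (G i) (c i))
    (I : Ideal PS) (hI : I = Ideal.span (Set.range F))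
    (hin : inIdeal J ≤ I) :
    ∃ D : ℕ, ∀ d : ℕ, D ≤ d → hdim J d = hdim I d := by
  obtain ⟨k, hk⟩ := honly
  have hzG : ∀ i, zdeg (G i) = c i := fun i => zdeg_eq_of_zCoeff_ne_zero (hc i).1 (hc i).2
  have hGJ : ∀ i, G i ∈ J := fun i => hJ ▸ Ideal.subset_span ⟨i, rfl⟩
  have hJhom : J.IsHomogeneous (homogeneousSubmodule (Fin 3) ℝ) :=
    hJ ▸ Ideal.homogeneous_span _ _ (by rintro _ ⟨i, rfl⟩; exact ⟨n i, hhom i⟩)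
  have hFG : F = fun i => zCoeff (G i) (zdeg (G i)) := funext fun i => by rw [hF, hzG]
  refine ⟨k + Finset.univ.sup c, fun d hd => ?_⟩
  have hpiece : homogeneousPiece I d = homogeneousPiece (inIdeal J) d := by
    refine le_antisymm ?_ (inf_le_inf_left _ fun p hp => hin hp)
    rw [hI, hFG]
    refine homogeneousPiece_span_zCoeff_le_inIdeal hhom hGJ hk fun i => ?_
    rw [hzG]
    exact le_trans (Nat.add_le_add_left (Finset.le_sup (Finset.mem_univ i)) k) hd
  have hJd := hdim_add_finrank_homogeneousPiece J d
  have hId := hdim_add_finrank_homogeneousPiece I d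
  rw [← finrank_homogeneousPiece_inIdeal hJhom, ← hpiece] at hJd
  omega

theorem initial_containment_same_hilbert_polynomial
    (N : ℕ) (n : Fin N → ℕ) (G : Fin N → PS)
    (hhom : ∀ i, (G i).IsHomogeneous (n i))
    (hvan : ∀ i, G i ∈ (Ideal.span {X 0, X 1} : Ideal PS))
    (J : Ideal PS) (hJ : J = Ideal.span (Set.range G))
    (honly : ∃ k : ℕ, (Ideal.span {X 0, X 1} : Ideal PS) ^ k ≤ J)
    (c : Fin N → ℕ)
    (hc : ∀ i, (∀ m ∈ (G i).support, m 2 ≤ c i) ∧ zCoeff (G i) (c i) ≠ 0)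
    (F : Fin N → PS) (hF : ∀ i, F i = zCoeff (G i) (c i))
    (I : Ideal PS) (hI : I = Ideal.span (Set.range F))
    (hin : inIdeal J ≤ I) :
    ∃ D : ℕ, ∀ d : ℕ, D ≤ d → hdim J d = hdim I d :=
  initial_containment_same_hilbert_polynomial_general N n G hhom J hJ honly c hc F hF I hI hin

end
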